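/- If every directed cycle in the envy graph of an allocation X has nonpositive total weight, and π_i is defined as the maximum total weight over all simple directed paths originating at node i (with the empty path of weight 0 allowed), then π is the minimum total-payment vector among all nonnegative payment vectors making (X, π) envy-free; that is, Σ_i π_i minimizes Σ_i q_i over all q ≥ 0 with q_i − q_j ≥ v_i(X_j) − v_i(X_i) for all i, j. -/

import Mathlib

/-!
The longest-path potential `π` is itself an envy-free payment. Take a longest simple path `l`
from `j`. If `i ∉ l`, then `i :: l` is a simple path from `i`, so `w i j + π j ≤ π i`. Otherwise
`l = p ++ i :: s`: the edge `i → j` followed by `p` returns to `i`, a cycle of nonpositive weight,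
and `i :: s` is a simple path from `i`, which again gives `w i j + π j ≤ π i`. Conversely, the
constraints of a feasible `q` telescope along a path from `i` to `k`, bounding its weight by
`q i - q k ≤ q i`; hence `π ≤ q` pointwise.
-/

/-- Total weight of a walk (list of vertices) under edge weights `w`. -/
def walkWeight {V : Type*} (w : V → V → ℝ) : List V → ℝ
  | [] => 0
  | [_] => 0
  | a :: b :: l => w a b + walkWeight w (b :: l)

section LongestPaths

variable {V : Type*} (w : V → V → ℝ)

def simplePathWeights (i : V) : Set ℝ :=
  {x | ∃ l : List V, l.Nodup ∧ l.head? = some i ∧ x = walkWeight w l}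

def NoPositiveCycle : Prop :=
  ∀ (a : V) (l : List V), (a :: l).Nodup → walkWeight w (a :: (l ++ [a])) ≤ 0

variable {w}

lemma walkWeight_cons_of_head? {a b : V} {l : List V} (h : l.head? = some b) :
    walkWeight w (a :: l) = w a b + walkWeight w l := by
  obtain ⟨l, rfl⟩ := List.head?_eq_some_iff.mp h
  rfl

lemma walkWeight_append_cons (p : List V) (a : V) (s : List V) :
    walkWeight w (p ++ a :: s) = walkWeight w (p ++ [a]) + walkWeight w (a :: s) := by
  induction p with
  | nil => simp [walkWeight]
  | cons x p ih =>
    rcases p with _ | ⟨y, p⟩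
    · simp [walkWeight]
    · simp only [List.cons_append, walkWeight] at ih ⊢
      linarith

lemma walkWeight_le_sub_getLast {q : V → ℝ} (hq : ∀ i j, w i j ≤ q i - q j) (a : V)
    (l : List V) : walkWeight w (a :: l) ≤ q a - q ((a :: l).getLast (List.cons_ne_nil a l)) := by
  induction l generalizing a with
  | nil => simp [walkWeight]
  | cons b l ih =>
    rw [List.getLast_cons (List.cons_ne_nil b l), walkWeight]
    linarith [ih b, hq a b]

lemma nonneg_of_isGreatest_simplePathWeights {i : V} {p : ℝ}
    (hp : IsGreatest (simplePathWeights w i) p) : 0 ≤ p :=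
  hp.2 ⟨[i], List.nodup_singleton i, rfl, rfl⟩

lemma le_of_isGreatest_simplePathWeights {q : V → ℝ} (hq0 : ∀ k, 0 ≤ q k)
    (hq : ∀ i j, w i j ≤ q i - q j) {i : V} {p : ℝ}
    (hp : IsGreatest (simplePathWeights w i) p) : p ≤ q i := by
  obtain ⟨l, -, hhead, rfl⟩ := hp.1
  obtain ⟨l, rfl⟩ := List.head?_eq_some_iff.mp hhead
  linarith [walkWeight_le_sub_getLast hq i l, hq0 ((i :: l).getLast (List.cons_ne_nil i l))]

lemma add_le_of_isGreatest_simplePathWeights (hcyc : NoPositiveCycle w) {π : V → ℝ}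
    (hπ : ∀ i, IsGreatest (simplePathWeights w i) (π i)) (i j : V) :
    w i j + π j ≤ π i := by
  obtain ⟨l, hnodup, hhead, hπj⟩ := (hπ j).1
  by_cases hi : i ∈ l
  · obtain ⟨p, s, rfl⟩ := List.append_of_mem hi
    obtain ⟨hp, his, hdisj⟩ := List.nodup_append.mp hnodup
    have hip : (i :: p).Nodup := List.nodup_cons.mpr ⟨fun h => hdisj i h i (by simp) rfl, hp⟩
    have hhead' : (p ++ [i]).head? = some j := by
      rcases p with _ | ⟨x, p⟩ <;> simpa using hhead
    have hcycle := hcyc i p hip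
    rw [walkWeight_cons_of_head? hhead'] at hcycle
    have htail : walkWeight w (i :: s) ≤ π i := (hπ i).2 ⟨i :: s, his, rfl, rfl⟩
    rw [hπj, walkWeight_append_cons]
    linarith
  · rw [hπj, ← walkWeight_cons_of_head? hhead]
    exact (hπ i).2 ⟨i :: l, List.nodup_cons.mpr ⟨hi, hnodup⟩, rfl, rfl⟩

end LongestPaths

/-- If the envy graph of `X` (with `v i j` the value of agent `i` for bundle
`j`) has no positive-weight directed cycle, and `π i` is the maximum total
weight of a simple path starting at `i`, then `∑ π i` is the minimum total
payment over all nonnegative payment vectors making `(X, q)` envy-free. -/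
theorem stmt10 {n : ℕ} (v : Fin n → Fin n → ℝ)
    (hcyc : ∀ (a : Fin n) (l : List (Fin n)), (a :: l).Nodup →
      walkWeight (fun i j => v i j - v i i) (a :: (l ++ [a])) ≤ 0)
    (π : Fin n → ℝ)
    (hπ : ∀ i, IsGreatest {x : ℝ | ∃ l : List (Fin n), l.Nodup ∧
      l.head? = some i ∧ x = walkWeight (fun i j => v i j - v i i) l} (π i)) :
    IsLeast {s : ℝ | ∃ q : Fin n → ℝ, (∀ i, 0 ≤ q i) ∧
      (∀ i j, q i - q j ≥ v i j - v i i) ∧ s = ∑ i, q i} (∑ i, π i) := by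
  have hπ' : ∀ i, IsGreatest (simplePathWeights (fun i j => v i j - v i i) i) (π i) := hπ
  refine ⟨⟨π, fun i => nonneg_of_isGreatest_simplePathWeights (hπ' i), fun i j => ?_, rfl⟩, ?_⟩
  · linarith [add_le_of_isGreatest_simplePathWeights hcyc hπ' i j]
  · rintro _ ⟨q, hq0, hq, rfl⟩
    exact Finset.sum_le_sum fun i _ =>
      le_of_isGreatest_simplePathWeights hq0 (fun a b => by linarith [hq a b]) (hπ' i)
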